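/- Normal-form completeness of parallel unbiased reduction (Call-by-Name): for every β-normal λ-term N and every λ-term M, M →β* N if and only if M ⇒pd* N (where * denotes reflexive-transitive closure). -/

import Mathlib

/-- Untyped λ-terms in de Bruijn representation. -/
inductive Tm : Type
  | var : ℕ → Tm
  | lam : Tm → Tm
  | app : Tm → Tm → Tm
deriving DecidableEq

namespace Tm

/-- Lift (shift by one) the free variables of index `≥ d`. -/
def lift (d : ℕ) : Tm → Tm
  | var n => if n < d then var n else var (n + 1)
  | lam M => lam (lift (d + 1) M)
  | app M N => app (lift d M) (lift d N)

/-- Capture-avoiding substitution `M[N/k]` of `N` for the free variable `k` in `M`. -/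
def subst : Tm → ℕ → Tm → Tm
  | var n, k, N => if n = k then N else if k < n then var (n - 1) else var n
  | lam M, k, N => lam (subst M (k + 1) (lift 0 N))
  | app M₁ M₂, k, N => app (subst M₁ k N) (subst M₂ k N)

end Tm

/-- β-reduction: the closure of the root rule `(λx.M)N ↦β M[N/x]` under arbitrary contexts. -/
inductive Beta : Tm → Tm → Prop
  | beta (M N : Tm) : Beta (Tm.app (Tm.lam M) N) (M.subst 0 N)
  | lam {M M'} : Beta M M' → Beta (Tm.lam M) (Tm.lam M')
  | appL {M M' N} : Beta M M' → Beta (Tm.app M N) (Tm.app M' N)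
  | appR {M N N'} : Beta N N' → Beta (Tm.app M N) (Tm.app M N')

/-- Head reduction: the closure of `↦β` under head contexts `H ::= ⟨⟩ | λx.H | H M`. -/
inductive Head : Tm → Tm → Prop
  | beta (M N : Tm) : Head (Tm.app (Tm.lam M) N) (M.subst 0 N)
  | lam {M M'} : Head M M' → Head (Tm.lam M) (Tm.lam M')
  | appL {M M' N} : Head M M' → Head (Tm.app M N) (Tm.app M' N)

/-- The unbiased strategy `⊳`: perform head steps as long as possible; once the term has
no head redex, iterate in the subterms (in arbitrary order). -/
inductive Unb : Tm → Tm → Prop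
  | head {M M'} : Head M M' → Unb M M'
  | lam {P P'} : (∀ s, ¬ Head (Tm.lam P) s) → Unb P P' → Unb (Tm.lam P) (Tm.lam P')
  | appL {P P' Q} : (∀ s, ¬ Head (Tm.app P Q) s) → Unb P P' →
      Unb (Tm.app P Q) (Tm.app P' Q)
  | appR {P Q Q'} : (∀ s, ¬ Head (Tm.app P Q) s) → Unb Q Q' →
      Unb (Tm.app P Q) (Tm.app P Q')

/-- `M` is β-normal: it has no `→β`-successor. -/
def BetaNormal (M : Tm) : Prop := ∀ N, ¬ Beta M N

/-- Parallel unbiased reduction `⇒pd`: a head step if there is one; the identity on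
β-normal forms; otherwise (a β-redex but no head redex) reduce all subterms in
parallel. -/
inductive Pd : Tm → Tm → Prop
  | head {M M'} : Head M M' → Pd M M'
  | nf {M} : BetaNormal M → Pd M M
  | lam {P P'} : ¬ BetaNormal (Tm.lam P) → (∀ s, ¬ Head (Tm.lam P) s) →
      Pd P P' → Pd (Tm.lam P) (Tm.lam P')
  | app {P₁ P₁' P₂ P₂'} : ¬ BetaNormal (Tm.app P₁ P₂) →
      (∀ s, ¬ Head (Tm.app P₁ P₂) s) → Pd P₁ P₁' → Pd P₂ P₂' →
      Pd (Tm.app P₁ P₂) (Tm.app P₁' P₂')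

/-!
The direction `⇒pd* ⊆ →β*` is immediate. For the converse we standardise, using Kashima's
inductive presentation of standard reduction: `M ⇒st N` when `M` weak-head reduces to a term of
the same shape as `N` whose immediate subterms standard-reduce to those of `N`. This relation is
substitutive and therefore absorbs a `β`-step on its right, so `→β* ⊆ ⇒st`. A standard reduction
to a normal form `N` becomes a `⇒pd*` sequence: weak head steps are head steps, and below the head
the standard reductions of the subterms are run side by side, which is allowed because a subterm
that has reached its normal form is kept by the identity rule on normal forms.
-/

namespace Tm

theorem lift_lift (M : Tm) {i j : ℕ} (h : i ≤ j) :
    lift i (lift j M) = lift (j + 1) (lift i M) := by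
  induction M generalizing i j with
  | var n => grind [lift]
  | lam M ih => simp only [lift, ih (Nat.succ_le_succ h)]
  | app M N ihM ihN => simp only [lift, ihM h, ihN h]

theorem subst_lift (M N : Tm) (k : ℕ) : (lift k M).subst k N = M := by
  induction M generalizing k N with
  | var n => grind [lift, subst]
  | lam M ih => simp only [lift, subst, ih]
  | app M₁ M₂ ih₁ ih₂ => simp only [lift, subst, ih₁, ih₂]

theorem lift_subst_of_le (M N : Tm) {d k : ℕ} (h : d ≤ k) :
    lift d (M.subst k N) = (lift d M).subst (k + 1) (lift d N) := by
  induction M generalizing d k N with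
  | var n => grind [lift, subst]
  | lam M ih => simp only [lift, subst, ih _ (Nat.succ_le_succ h), lift_lift N (Nat.zero_le d)]
  | app M₁ M₂ ih₁ ih₂ => simp only [lift, subst, ih₁ _ h, ih₂ _ h]

theorem lift_subst_of_ge (M N : Tm) {d k : ℕ} (h : k ≤ d) :
    lift d (M.subst k N) = (lift (d + 1) M).subst k (lift d N) := by
  induction M generalizing d k N with
  | var n => grind [lift, subst]
  | lam M ih => simp only [lift, subst, ih _ (Nat.succ_le_succ h), lift_lift N (Nat.zero_le d)]
  | app M₁ M₂ ih₁ ih₂ => simp only [lift, subst, ih₁ _ h, ih₂ _ h]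

theorem subst_subst (M N P : Tm) {i j : ℕ} (h : i ≤ j) :
    (M.subst i N).subst j P = (M.subst (j + 1) (lift i P)).subst i (N.subst j P) := by
  induction M generalizing i j N P with
  | var n => grind [lift, subst, subst_lift]
  | lam M ih =>
    simp only [subst, ih _ _ (Nat.succ_le_succ h), lift_lift P (Nat.zero_le i),
      lift_subst_of_le N P (Nat.zero_le j)]
  | app M₁ M₂ ih₁ ih₂ => simp only [subst, ih₁ _ _ h, ih₂ _ _ h]

end Tm

open Relation

theorem Head.toBeta {M N : Tm} (h : Head M N) : Beta M N := by
  induction h with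
  | beta M N => exact Beta.beta M N
  | lam _ ih => exact Beta.lam ih
  | appL _ ih => exact Beta.appL ih

theorem Pd.reflTransGen_beta {M N : Tm} (h : Pd M N) : ReflTransGen Beta M N := by
  induction h with
  | head h => exact .single h.toBeta
  | nf _ => exact .refl
  | lam _ _ _ ih => exact ih.lift Tm.lam fun _ _ => Beta.lam
  | @app _ P₁' P₂ _ _ _ _ _ ih₁ ih₂ =>
    exact (ih₁.lift (Tm.app · P₂) fun _ _ => Beta.appL).trans
      (ih₂.lift (Tm.app P₁') fun _ _ => Beta.appR)

inductive WHead : Tm → Tm → Prop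
  | beta (M N : Tm) : WHead (Tm.app (Tm.lam M) N) (M.subst 0 N)
  | appL {M M' N : Tm} : WHead M M' → WHead (Tm.app M N) (Tm.app M' N)

/-- Kashima's inductive characterisation of standard reduction. -/
inductive Standard : Tm → Tm → Prop
  | var {M : Tm} {n : ℕ} : ReflTransGen WHead M (Tm.var n) → Standard M (Tm.var n)
  | lam {M P P' : Tm} : ReflTransGen WHead M (Tm.lam P) → Standard P P' →
      Standard M (Tm.lam P')
  | app {M P P' Q Q' : Tm} : ReflTransGen WHead M (Tm.app P Q) → Standard P P' →
      Standard Q Q' → Standard M (Tm.app P' Q')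

namespace WHead

theorem toHead {M N : Tm} (h : WHead M N) : Head M N := by
  induction h with
  | beta M N => exact Head.beta M N
  | appL _ ih => exact Head.appL ih

theorem lift {M N : Tm} (h : WHead M N) (d : ℕ) : WHead (M.lift d) (N.lift d) := by
  induction h with
  | beta M N => rw [Tm.lift_subst_of_ge M N (Nat.zero_le d)]; exact beta _ _
  | appL _ ih => exact appL ih

theorem subst {M N : Tm} (h : WHead M N) (k : ℕ) (L : Tm) :
    WHead (M.subst k L) (N.subst k L) := by
  induction h with
  | beta M N => rw [Tm.subst_subst M N L (Nat.zero_le k)]; exact beta _ _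
  | appL _ ih => exact appL ih

theorem reflTransGen_appL {M M' : Tm} (h : ReflTransGen WHead M M') (N : Tm) :
    ReflTransGen WHead (Tm.app M N) (Tm.app M' N) :=
  h.lift (Tm.app · N) fun _ _ => appL

theorem reflTransGen_lift {M N : Tm} (h : ReflTransGen WHead M N) (d : ℕ) :
    ReflTransGen WHead (M.lift d) (N.lift d) :=
  h.lift (Tm.lift d) fun _ _ h => h.lift d

theorem reflTransGen_subst {M N : Tm} (h : ReflTransGen WHead M N) (k : ℕ) (L : Tm) :
    ReflTransGen WHead (M.subst k L) (N.subst k L) :=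
  h.lift (Tm.subst · k L) fun _ _ h => h.subst k L

end WHead

namespace Standard

theorem refl (M : Tm) : Standard M M := by
  induction M with
  | var n => exact var .refl
  | lam M ih => exact lam .refl ih
  | app M N ihM ihN => exact app .refl ihM ihN

theorem of_whead {M N L : Tm} (h : ReflTransGen WHead M N) (hs : Standard N L) :
    Standard M L := by
  cases hs with
  | var h' => exact var (h.trans h')
  | lam h' hs => exact lam (h.trans h') hs
  | app h' hs₁ hs₂ => exact app (h.trans h') hs₁ hs₂

theorem lift {M N : Tm} (h : Standard M N) (d : ℕ) : Standard (M.lift d) (N.lift d) := by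
  induction h generalizing d with
  | var h => exact of_whead (WHead.reflTransGen_lift h d) (refl _)
  | lam h _ ih => exact lam (WHead.reflTransGen_lift h d) (ih (d + 1))
  | app h _ _ ih₁ ih₂ => exact app (WHead.reflTransGen_lift h d) (ih₁ d) (ih₂ d)

theorem subst {M M' N N' : Tm} (h : Standard M M') (hN : Standard N N') (k : ℕ) :
    Standard (M.subst k N) (M'.subst k N') := by
  induction h generalizing k N N' with
  | @var M n h =>
    have h := WHead.reflTransGen_subst h k N
    by_cases hn : n = k
    · subst hn
      simp only [Tm.subst, if_true] at h ⊢
      exact of_whead h hN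
    · simp only [Tm.subst, if_neg hn] at h ⊢
      exact of_whead h (refl _)
  | lam h _ ih => exact lam (WHead.reflTransGen_subst h k N) (ih (hN.lift 0) (k + 1))
  | app h _ _ ih₁ ih₂ => exact app (WHead.reflTransGen_subst h k N) (ih₁ hN k) (ih₂ hN k)

theorem beta_right {M N N' : Tm} (h : Standard M N) (hb : Beta N N') : Standard M N' := by
  induction hb generalizing M with
  | beta P Q =>
    obtain ⟨⟩ | ⟨⟩ | ⟨hM, ⟨⟩ | ⟨hA, hP⟩, hQ⟩ := h
    have hred := (hM.trans (WHead.reflTransGen_appL hA _)).tail (WHead.beta _ _)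
    exact of_whead hred (hP.subst hQ 0)
  | lam _ ih =>
    obtain ⟨⟩ | ⟨hM, hs⟩ := h
    exact lam hM (ih hs)
  | appL _ ih =>
    obtain ⟨⟩ | ⟨⟩ | ⟨hM, hs₁, hs₂⟩ := h
    exact app hM (ih hs₁) hs₂
  | appR _ ih =>
    obtain ⟨⟩ | ⟨⟩ | ⟨hM, hs₁, hs₂⟩ := h
    exact app hM hs₁ (ih hs₂)

theorem of_reflTransGen_beta {M N : Tm} (h : ReflTransGen Beta M N) : Standard M N := by
  induction h with
  | refl => exact refl M
  | tail _ hb ih => exact ih.beta_right hb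

end Standard

namespace BetaNormal

theorem of_lam {P : Tm} (h : BetaNormal (Tm.lam P)) : BetaNormal P :=
  fun _ hb => h _ (Beta.lam hb)

theorem lam {P : Tm} (h : BetaNormal P) : BetaNormal (Tm.lam P) := by
  intro _ hb
  cases hb with | lam hb => exact h _ hb

theorem app_left {P Q : Tm} (h : BetaNormal (Tm.app P Q)) : BetaNormal P :=
  fun _ hb => h _ (Beta.appL hb)

theorem app_right {P Q : Tm} (h : BetaNormal (Tm.app P Q)) : BetaNormal Q :=
  fun _ hb => h _ (Beta.appR hb)

theorem app_ne_lam {P Q : Tm} (h : BetaNormal (Tm.app P Q)) (R : Tm) : P ≠ Tm.lam R := by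
  rintro rfl
  exact h _ (Beta.beta R Q)

theorem not_head {M : Tm} (h : BetaNormal M) (s : Tm) : ¬ Head M s :=
  fun hs => h s hs.toBeta

end BetaNormal

theorem not_head_app {P Q : Tm} (hP : ∀ s, ¬ Head P s) (hl : ∀ R, P ≠ Tm.lam R) (s : Tm) :
    ¬ Head (Tm.app P Q) s := by
  intro hs
  cases hs with
  | beta R _ => exact hl R rfl
  | appL hs => exact hP _ hs

namespace Pd

theorem head_or_normal_or_inner {M N : Tm} (h : Pd M N) :
    Head M N ∨ (BetaNormal M ∧ N = M) ∨ (¬ BetaNormal M ∧ ∀ s, ¬ Head M s) := by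
  cases h with
  | head h => exact .inl h
  | nf h => exact .inr (.inl ⟨h, rfl⟩)
  | lam hn hh _ => exact .inr (.inr ⟨hn, hh⟩)
  | app hn hh _ _ => exact .inr (.inr ⟨hn, hh⟩)

theorem eq_of_betaNormal {M N : Tm} (h : Pd M N) (hM : BetaNormal M) : N = M := by
  rcases h.head_or_normal_or_inner with hh | ⟨_, rfl⟩ | ⟨hn, _⟩
  · exact absurd hh.toBeta (hM N)
  · rfl
  · exact absurd hM hn

theorem lam_congr {P P' : Tm} (h : Pd P P') : Pd (Tm.lam P) (Tm.lam P') := by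
  rcases h.head_or_normal_or_inner with hh | ⟨hn, rfl⟩ | ⟨hn, hh⟩
  · exact head (Head.lam hh)
  · exact nf hn.lam
  · refine lam (mt BetaNormal.of_lam hn) (fun _ hs => ?_) h
    cases hs with | lam hs => exact hh _ hs

theorem exists_eq_lam {P R : Tm} (h : Pd (Tm.lam P) R) : ∃ Q, R = Tm.lam Q := by
  cases h with
  | head h => cases h with | lam _ => exact ⟨_, rfl⟩
  | nf _ | lam _ _ _ => exact ⟨_, rfl⟩

end Pd

theorem exists_eq_lam_of_reflTransGen_pd {P N : Tm} (h : ReflTransGen Pd (Tm.lam P) N) :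
    ∃ Q, N = Tm.lam Q := by
  induction h with
  | refl => exact ⟨P, rfl⟩
  | tail _ hstep ih =>
    obtain ⟨Q, rfl⟩ := ih
    exact hstep.exists_eq_lam

theorem exists_pd_of_reflTransGen_pd {P N : Tm} (h : ReflTransGen Pd P N) (hN : BetaNormal N) :
    ∃ X, Pd P X ∧ ReflTransGen Pd X N := by
  rcases h.cases_head with rfl | hstep
  · exact ⟨P, .nf hN, .refl⟩
  · exact hstep

theorem reflTransGen_pd_app_right {N₁ P₂ N₂ : Tm} (hN₁ : BetaNormal N₁)
    (hl : ∀ R, N₁ ≠ Tm.lam R) (h : ReflTransGen Pd P₂ N₂) :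
    ReflTransGen Pd (Tm.app N₁ P₂) (Tm.app N₁ N₂) := by
  induction h using ReflTransGen.head_induction_on with
  | refl => exact .refl
  | @head P₂ X hstep _ ih =>
    by_cases hn : BetaNormal P₂
    · rwa [hstep.eq_of_betaNormal hn] at ih
    · exact .head (.app (mt BetaNormal.app_right hn) (not_head_app hN₁.not_head hl)
        (.nf hN₁) hstep) ih

/-- Along `P₁ ⇒pd* N₁` no term is a λ (a λ only reduces to a λ), so `P₁ P₂` can only have a head
redex inside `P₁`; whenever `P₁` makes an inner step, `P₂` makes its next step in parallel, or
the identity step once it has reached `N₂`. -/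
theorem reflTransGen_pd_app {P₁ P₂ N₁ N₂ : Tm} (hN₁ : BetaNormal N₁) (hN₂ : BetaNormal N₂)
    (hl : ∀ R, N₁ ≠ Tm.lam R) (h₁ : ReflTransGen Pd P₁ N₁) (h₂ : ReflTransGen Pd P₂ N₂) :
    ReflTransGen Pd (Tm.app P₁ P₂) (Tm.app N₁ N₂) := by
  induction h₁ using ReflTransGen.head_induction_on generalizing P₂ with
  | refl => exact reflTransGen_pd_app_right hN₁ hl h₂
  | @head P₁ T hstep htail ih =>
    rcases hstep.head_or_normal_or_inner with hh | ⟨_, rfl⟩ | ⟨hn, hh⟩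
    · exact .head (.head (.appL hh)) (ih h₂)
    · exact ih h₂
    · have hP₁ : ∀ R, P₁ ≠ Tm.lam R := by
        rintro R rfl
        obtain ⟨Q, rfl⟩ := exists_eq_lam_of_reflTransGen_pd (.head hstep htail)
        exact hl Q rfl
      obtain ⟨X, hX, hXN⟩ := exists_pd_of_reflTransGen_pd h₂ hN₂
      exact .head (.app (mt BetaNormal.app_left hn) (not_head_app hh hP₁) hstep hX) (ih hXN)

theorem Standard.reflTransGen_pd {M N : Tm} (h : Standard M N) (hN : BetaNormal N) :
    ReflTransGen Pd M N := by
  have hwh {M N : Tm} (h : ReflTransGen WHead M N) : ReflTransGen Pd M N :=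
    ReflTransGen.mono (fun _ _ h => Pd.head h.toHead) _ _ h
  induction h with
  | var h => exact hwh h
  | lam h _ ih => exact (hwh h).trans ((ih hN.of_lam).lift Tm.lam fun _ _ => Pd.lam_congr)
  | app h _ _ ih₁ ih₂ =>
    exact (hwh h).trans (reflTransGen_pd_app hN.app_left hN.app_right hN.app_ne_lam
      (ih₁ hN.app_left) (ih₂ hN.app_right))

/-- **Normal-form completeness of parallel unbiased reduction (Call-by-Name)**:
for `N` β-normal, `M →β* N` iff `M ⇒pd* N`. -/
theorem cbn_parallel_nf_complete (M N : Tm) (hN : BetaNormal N) :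
    Relation.ReflTransGen Beta M N ↔ Relation.ReflTransGen Pd M N :=
  ⟨fun h => (Standard.of_reflTransGen_beta h).reflTransGen_pd hN,
    fun h => h.lift' id fun _ _ => Pd.reflTransGen_beta⟩
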